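/- Let A, B ∈ Mat_n(𝕋) and w ∈ {a,b}⁺ satisfy per(A) = tr(A), per(B) = tr(B), and rk_tr(w(A,B)) = n, and set W = w(A,B). Then for every entry W_{i,j} ≠ −∞ there exists a 1-cyclic walk from i to j on the labeled weighted digraph G(A,B), labeled by the word w, whose weight is exactly W_{i,j}. (A walk is 1-cyclic if it never returns to a node after leaving it; equivalently, every simple cycle it contains has length at most 1.) -/

import Mathlib

attribute [local instance] Classical.propDecidable

/-- The tropical (max-plus) semiring carrier: `ℝ ∪ {−∞}`. -/
abbrev Trop : Type := WithBot ℝ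

/-- Tropical matrix multiplication: `(A ⊙ B)_{i,j} = max_k (A_{i,k} + B_{k,j})`. -/
def tmul {n m p : ℕ} (A : Matrix (Fin n) (Fin m) Trop) (B : Matrix (Fin m) (Fin p) Trop) :
    Matrix (Fin n) (Fin p) Trop :=
  fun i j => Finset.univ.sup (fun k => A i k + B k j)

/-- The tropical identity matrix. -/
def tId (n : ℕ) : Matrix (Fin n) (Fin n) Trop :=
  fun i j => if i = j then (0 : Trop) else ⊥

/-- Tropical matrix power. -/
def tPow {n : ℕ} (A : Matrix (Fin n) (Fin n) Trop) : ℕ → Matrix (Fin n) (Fin n) Trop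
  | 0 => tId n
  | t + 1 => tmul A (tPow A t)

/-- Weight of a permutation: `ω(π) = Σ_i A_{i,π(i)}`. -/
def permWeight {n : ℕ} (A : Matrix (Fin n) (Fin n) Trop) (π : Equiv.Perm (Fin n)) : Trop :=
  ∑ i, A i (π i)

/-- Tropical permanent: `per(A) = max_π ω(π)`. -/
def tPer {n : ℕ} (A : Matrix (Fin n) (Fin n) Trop) : Trop :=
  Finset.univ.sup (fun π : Equiv.Perm (Fin n) => permWeight A π)

/-- Nonsingular: exactly one permutation attains the permanent. -/
def Nonsingular {n : ℕ} (A : Matrix (Fin n) (Fin n) Trop) : Prop :=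
  ∃! π : Equiv.Perm (Fin n), permWeight A π = tPer A

/-- Tropical rank: the largest `k` such that `A` has a nonsingular `k × k` submatrix. -/
noncomputable def tropRank {n : ℕ} (A : Matrix (Fin n) (Fin n) Trop) : ℕ :=
  sSup {k : ℕ | ∃ (r : Fin k → Fin n) (c : Fin k → Fin n),
    Function.Injective r ∧ Function.Injective c ∧
    Nonsingular (fun i j => A (r i) (c j))}

/-- Factor rank: the smallest `k` such that `A = B ⊙ C` with `B` of size `n × k` and `C` of
size `k × n`. -/
noncomputable def facRank {n : ℕ} (A : Matrix (Fin n) (Fin n) Trop) : ℕ :=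
  sInf {k : ℕ | ∃ (B : Matrix (Fin n) (Fin k) Trop) (C : Matrix (Fin k) (Fin n) Trop),
    A = tmul B C}

/-- Trace: `tr(A) = Σ_i A_{i,i}` in `ℝ ∪ {−∞}`. -/
def tTrace {n : ℕ} (A : Matrix (Fin n) (Fin n) Trop) : Trop := ∑ i, A i i

/-- Evaluation of a word over the alphabet `{a, b}` (with `a = true`, `b = false`) at the
pair of tropical matrices `(A, B)`, i.e. `a ↦ A`, `b ↦ B`.  (On the empty word it returns
the identity matrix; we only use it on nonempty words.) -/
def mEval {n : ℕ} (A B : Matrix (Fin n) (Fin n) Trop) : List Bool → Matrix (Fin n) (Fin n) Trop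
  | [] => tId n
  | x :: w => tmul (if x then A else B) (mEval A B w)

/-- `lcm(1, 2, …, n)`. -/
def nbar (n : ℕ) : ℕ := (Finset.Icc 1 n).lcm id

/-- A walk on the digraph `G(A)`, given by its list of visited nodes: consecutive nodes must
be joined by an arc, i.e. have weight `≠ −∞`. -/
def IsWalk {n : ℕ} (A : Matrix (Fin n) (Fin n) Trop) (p : List (Fin n)) : Prop :=
  p.Chain' (fun i j => A i j ≠ ⊥)

/-- The weight of a walk: sum of the weights of its arcs. -/
def walkWeight {n : ℕ} (A : Matrix (Fin n) (Fin n) Trop) (p : List (Fin n)) : Trop :=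
  ((p.zip p.tail).map (fun q => A q.1 q.2)).sum

/-- The set of nodes on the cycle of the permutation `τ` containing `i`. -/
noncomputable def cycFinset {n : ℕ} (τ : Equiv.Perm (Fin n)) (i : Fin n) : Finset (Fin n) :=
  Finset.univ.filter (fun j => τ.SameCycle i j)

/-- `μ_i`: the average weight of the unique cycle of `τ` containing `i`. -/
noncomputable def mu {n : ℕ} (A : Matrix (Fin n) (Fin n) Trop) (τ : Equiv.Perm (Fin n))
    (i : Fin n) : ℝ :=
  (∑ j ∈ cycFinset τ i, WithBot.unbotD 0 (A j (τ j))) / (cycFinset τ i).card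

/-- Upper triangular tropical matrix: all entries below the diagonal are `−∞`. -/
def UpperTri {n : ℕ} (A : Matrix (Fin n) (Fin n) Trop) : Prop :=
  ∀ i j : Fin n, j < i → A i j = ⊥

/-- Word substitution: replace each letter `a` (`= true`) of `w` by `w₁` and each letter
`b` (`= false`) by `w₂`. -/
def subst (w w₁ w₂ : List Bool) : List Bool :=
  w.flatMap (fun x => if x then w₁ else w₂)

/-- `k`-fold concatenation `w^k` of a word. -/
def wpow (w : List Bool) : ℕ → List Bool
  | 0 => []
  | t + 1 => w ++ wpow w t

/-- Evaluation of a word over an alphabet `α` in a semigroup `S` under the assignment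
`f : α → S`; returns `none` on the empty word. -/
def aEval {S : Type*} [Mul S] {α : Type*} (f : α → S) : List α → Option S
  | [] => none
  | x :: w => some (w.foldl (fun acc y => acc * f y) (f x))

/-!
Every entry `W i j` of `W = w(A, B)` is the weight of a heaviest walk labeled by `w`. Fix the
unique optimal permutation `π` of `W` and heaviest walks from each `v` to `π v`: no two of them
meet at the same time, since exchanging their tails would make a second permutation optimal.
Hence at every time they occupy all nodes, so `per W` is at most the sum of the permanents of
the letters, which are their traces. As `tr W ≤ per W`, the walk looping at `v` all along has
weight exactly `W v v`, and this is finite. Now if a heaviest walk leaves a node `v` and comes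
back, the detour is a closed walk at `v` and weighs at most `W v v`; replacing it by loops at
`v` keeps the walk heaviest and adds loops, so a heaviest walk with the most loops is 1-cyclic.
-/

section Walks

variable {n : ℕ}

/-- A walk is a node sequence `g : ℕ → Fin n` whose `t`-th arc `g t → g (t + 1)` is weighted by
`M t`; this is the weight of its part between times `a` and `b`. -/
def segWeight (M : ℕ → Matrix (Fin n) (Fin n) Trop) (g : ℕ → Fin n) (a b : ℕ) : Trop :=
  ∑ t ∈ Finset.Ico a b, M t (g t) (g (t + 1))

lemma segWeight_add (M : ℕ → Matrix (Fin n) (Fin n) Trop) (g : ℕ → Fin n) {a b c : ℕ}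
    (hab : a ≤ b) (hbc : b ≤ c) :
    segWeight M g a b + segWeight M g b c = segWeight M g a c :=
  Finset.sum_Ico_consecutive _ hab hbc

lemma segWeight_zero_succ (M : ℕ → Matrix (Fin n) (Fin n) Trop) (g : ℕ → Fin n) (L : ℕ) :
    segWeight M g 0 (L + 1) =
      M 0 (g 0) (g 1) + segWeight (fun t => M (t + 1)) (fun t => g (t + 1)) 0 L := by
  simp only [segWeight, ← Finset.range_eq_Ico]
  rw [Finset.sum_range_succ', add_comm]

def glueAt (g : ℕ → Fin n) (t : ℕ) (g' : ℕ → Fin n) : ℕ → Fin n :=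
  fun s => if s ≤ t then g s else g' s

lemma glueAt_of_le {g g' : ℕ → Fin n} {t s : ℕ} (hs : s ≤ t) : glueAt g t g' s = g s :=
  if_pos hs

lemma glueAt_of_ge {g g' : ℕ → Fin n} {t s : ℕ} (h : g t = g' t) (hs : t ≤ s) :
    glueAt g t g' s = g' s := by
  unfold glueAt
  split_ifs with hst
  · rwa [le_antisymm hst hs]
  · rfl

lemma segWeight_glueAt (M : ℕ → Matrix (Fin n) (Fin n) Trop) {g g' : ℕ → Fin n} {t : ℕ}
    (h : g t = g' t) {a b : ℕ} (hat : a ≤ t) (htb : t ≤ b) :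
    segWeight M (glueAt g t g') a b = segWeight M g a t + segWeight M g' t b := by
  rw [← segWeight_add _ _ hat htb]
  congr 1
  · refine Finset.sum_congr rfl fun s hs => ?_
    have := (Finset.mem_Ico.mp hs).2
    rw [glueAt_of_le this.le, glueAt_of_le this]
  · refine Finset.sum_congr rfl fun s hs => ?_
    have := (Finset.mem_Ico.mp hs).1
    rw [glueAt_of_ge h this, glueAt_of_ge h (by omega)]

lemma segWeight_glueAt_add_glueAt (M : ℕ → Matrix (Fin n) (Fin n) Trop) {g g' : ℕ → Fin n}
    {t L : ℕ} (h : g t = g' t) (ht : t ≤ L) :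
    segWeight M (glueAt g t g') 0 L + segWeight M (glueAt g' t g) 0 L =
      segWeight M g 0 L + segWeight M g' 0 L := by
  rw [segWeight_glueAt M h (Nat.zero_le t) ht, segWeight_glueAt M h.symm (Nat.zero_le t) ht,
    ← segWeight_add M g (Nat.zero_le t) ht, ← segWeight_add M g' (Nat.zero_le t) ht]
  abel

end Walks

section Words

variable {n : ℕ} (A B : Matrix (Fin n) (Fin n) Trop)

def letterSeq (w : List Bool) (t : ℕ) : Matrix (Fin n) (Fin n) Trop :=
  if w.getD t false then A else B

lemma segWeight_le_mEval : ∀ (w : List Bool) (g : ℕ → Fin n),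
    segWeight (letterSeq A B w) g 0 w.length ≤ mEval A B w (g 0) (g w.length)
  | [], g => by simp [segWeight, mEval, tId]
  | x :: u, g => by
    rw [List.length_cons, segWeight_zero_succ]
    calc letterSeq A B (x :: u) 0 (g 0) (g 1) +
          segWeight (letterSeq A B u) (fun t => g (t + 1)) 0 u.length
        ≤ (if x then A else B) (g 0) (g 1) + mEval A B u (g 1) (g (u.length + 1)) :=
          add_le_add le_rfl (segWeight_le_mEval u fun t => g (t + 1))
      _ ≤ mEval A B (x :: u) (g 0) (g (u.length + 1)) :=
          Finset.le_sup (f := fun k => (if x then A else B) (g 0) k + mEval A B u k _)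
            (Finset.mem_univ (g 1))

lemma exists_segWeight_eq_mEval : ∀ (w : List Bool) (i j : Fin n), mEval A B w i j ≠ ⊥ →
    ∃ g : ℕ → Fin n, g 0 = i ∧ g w.length = j ∧
      segWeight (letterSeq A B w) g 0 w.length = mEval A B w i j
  | [], i, j, hij => by
    obtain rfl : i = j := by_contra fun h => hij (by simp [mEval, tId, h])
    exact ⟨fun _ => i, rfl, rfl, by simp [segWeight, mEval, tId]⟩
  | x :: u, i, j, hij => by
    obtain ⟨k, -, hk⟩ := Finset.exists_mem_eq_sup Finset.univ ⟨i, Finset.mem_univ i⟩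
      fun k => (if x then A else B) i k + mEval A B u k j
    have hk' : (if x then A else B) i k + mEval A B u k j ≠ ⊥ := hk ▸ hij
    obtain ⟨g, hg0, hgL, hg⟩ := exists_segWeight_eq_mEval u k j (WithBot.add_ne_bot.mp hk').2
    refine ⟨fun t => Nat.casesOn t i g, rfl, hgL, ?_⟩
    rw [List.length_cons, segWeight_zero_succ]
    exact (congrArg₂ _ (by rw [← hg0]; rfl) hg).trans hk.symm

lemma sum_get_eq_segWeight (w : List Bool) (g : ℕ → Fin n) :
    ∑ k : Fin w.length, (if w.get k then A else B) (g k.castSucc) (g k.succ) =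
      segWeight (letterSeq A B w) g 0 w.length := by
  rw [segWeight, ← Finset.range_eq_Ico, ← Fin.sum_univ_eq_sum_range]
  refine Finset.sum_congr rfl fun k _ => ?_
  simp [letterSeq]

end Words

section Permanent

variable {n : ℕ}

lemma permWeight_le_tPer (M : Matrix (Fin n) (Fin n) Trop) (σ : Equiv.Perm (Fin n)) :
    permWeight M σ ≤ tPer M :=
  Finset.le_sup (Finset.mem_univ σ)

lemma tTrace_le_tPer (M : Matrix (Fin n) (Fin n) Trop) : tTrace M ≤ tPer M :=
  permWeight_le_tPer M 1

lemma sum_apply_le_tPer (M : Matrix (Fin n) (Fin n) Trop) (p q : Fin n ≃ Fin n) :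
    ∑ v, M (p v) (q v) ≤ tPer M := by
  rw [← Equiv.sum_comp p.symm]
  simp only [Equiv.apply_symm_apply]
  exact permWeight_le_tPer M (p.symm.trans q)

lemma Nonsingular.of_reindex {M : Matrix (Fin n) (Fin n) Trop} (r c : Fin n ≃ Fin n)
    (h : Nonsingular fun i j => M (r i) (c j)) : Nonsingular M := by
  let Φ : Equiv.Perm (Fin n) ≃ Equiv.Perm (Fin n) :=
    ⟨fun π => r.symm.trans (π.trans c), fun σ => r.trans (σ.trans c.symm),
      fun π => by ext; simp, fun σ => by ext; simp⟩
  have hΦ : ∀ π, permWeight (fun i j => M (r i) (c j)) π = permWeight M (Φ π) := fun π => by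
    unfold permWeight
    conv_rhs => rw [← Equiv.sum_comp r]
    simp [Φ]
  have hper : tPer (fun i j => M (r i) (c j)) = tPer M := by
    simp only [tPer, hΦ]
    conv_rhs => rw [← Finset.univ_map_equiv_to_embedding Φ, Finset.sup_map]
    rfl
  unfold Nonsingular at h ⊢
  exact (Φ.existsUnique_congr fun π => by rw [hΦ, hper]).mp h

lemma nonsingular_of_subsingleton [Subsingleton (Equiv.Perm (Fin n))]
    (M : Matrix (Fin n) (Fin n) Trop) : Nonsingular M :=
  ⟨1, le_antisymm (permWeight_le_tPer M 1)
    (Finset.sup_le fun σ _ => by rw [Subsingleton.elim σ 1]), fun σ _ => Subsingleton.elim σ 1⟩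

lemma nonsingular_of_tropRank_eq {M : Matrix (Fin n) (Fin n) Trop} (h : tropRank M = n) :
    Nonsingular M := by
  set S := {k : ℕ | ∃ (r : Fin k → Fin n) (c : Fin k → Fin n),
    Function.Injective r ∧ Function.Injective c ∧ Nonsingular fun i j => M (r i) (c j)}
  have hzero : 0 ∈ S :=
    ⟨Fin.elim0, Fin.elim0, fun x => x.elim0, fun x => x.elim0, nonsingular_of_subsingleton _⟩
  have hbdd : BddAbove S :=
    ⟨n, fun k ⟨r, _, hr, _⟩ => by simpa using Fintype.card_le_of_injective r hr⟩
  have hmem : tropRank M ∈ S := Nat.sSup_mem ⟨0, hzero⟩ hbdd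
  rw [h] at hmem
  obtain ⟨r, c, hr, hc, hrc⟩ := hmem
  exact hrc.of_reindex (Equiv.ofBijective r hr.bijective_of_finite)
    (Equiv.ofBijective c hc.bijective_of_finite)

lemma Nonsingular.tPer_ne_bot {M : Matrix (Fin n) (Fin n) Trop} (hM : Nonsingular M)
    {i j : Fin n} (hij : M i j ≠ ⊥) : tPer M ≠ ⊥ := by
  rcases subsingleton_or_nontrivial (Fin n) with h | h
  · refine ne_bot_of_le_ne_bot ?_ (tTrace_le_tPer M)
    rw [tTrace, Fintype.sum_subsingleton _ i]
    rwa [Subsingleton.elim j i] at hij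
  · intro hbot
    obtain ⟨σ, τ, hστ⟩ := exists_pair_ne (Equiv.Perm (Fin n))
    have hopt : ∀ π, permWeight M π = tPer M := fun π =>
      hbot ▸ le_bot_iff.mp (hbot ▸ permWeight_le_tPer M π)
    exact hστ (hM.unique (hopt σ) (hopt τ))

end Permanent

lemma WithBot.eq_of_le_of_sum_le_sum {ι α : Type*} [Fintype ι] [AddCommMonoid α] [PartialOrder α]
    [IsOrderedCancelAddMonoid α] {f g : ι → WithBot α} (hfg : ∀ i, f i ≤ g i)
    (hsum : ∑ i, g i ≤ ∑ i, f i) (hf : ∑ i, f i ≠ ⊥) (i : ι) : f i = g i := by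
  have hf' : ∀ i, f i ≠ ⊥ := by simpa [WithBot.sum_eq_bot_iff] using hf
  have hg' : ∀ i, g i ≠ ⊥ := fun i => ne_bot_of_le_ne_bot (hf' i) (hfg i)
  lift f to ι → α using hf'
  lift g to ι → α using hg'
  simp only [WithBot.coe_le_coe, ← WithBot.coe_sum] at hfg hsum
  exact congrArg _ <| (Finset.sum_eq_sum_iff_of_le fun i _ => hfg i).mp
    (le_antisymm (Finset.sum_le_sum fun i _ => hfg i) hsum) i (Finset.mem_univ i)

section HeaviestWalks

variable {n : ℕ} (M : ℕ → Matrix (Fin n) (Fin n) Trop) (L : ℕ) (W : Matrix (Fin n) (Fin n) Trop)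

lemma injective_slice_of_unique_optimal
    (hle : ∀ g, segWeight M g 0 L ≤ W (g 0) (g L)) {π : Equiv.Perm (Fin n)}
    (huniq : ∀ σ, permWeight W σ = tPer W → σ = π) (g : Fin n → ℕ → Fin n)
    (hg0 : ∀ v, g v 0 = v) (hgL : ∀ v, g v L = π v)
    (hg : tPer W ≤ ∑ v, segWeight M (g v) 0 L) {t : ℕ} (ht : t ≤ L) :
    Function.Injective fun v => g v t := by
  intro a b hab
  by_contra hne
  set σ := Equiv.swap a b
  have hσ : ∀ k, g k t = g (σ k) t := fun k => by
    rcases eq_or_ne k a with rfl | hka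
    · simpa [σ] using hab
    rcases eq_or_ne k b with rfl | hkb
    · simpa [σ] using hab.symm
    · rw [Equiv.swap_apply_of_ne_of_ne hka hkb]
  -- swapping the tails of the walks through `a` and `b` yields walks along `σ.trans π`
  have hopt : permWeight W (σ.trans π) = tPer W := by
    refine le_antisymm (permWeight_le_tPer W _) ?_
    calc tPer W ≤ ∑ k, segWeight M (g k) 0 L := hg
      _ = ∑ k, (segWeight M (g k) 0 t + segWeight M (g (σ k)) t L) := by
        rw [Finset.sum_add_distrib, Equiv.sum_comp σ fun k => segWeight M (g k) t L,
          ← Finset.sum_add_distrib]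
        simp only [segWeight_add M _ (Nat.zero_le t) ht]
      _ = ∑ k, segWeight M (glueAt (g k) t (g (σ k))) 0 L := by
        simp only [segWeight_glueAt M (hσ _) (Nat.zero_le t) ht]
      _ ≤ ∑ k, W k (π (σ k)) := Finset.sum_le_sum fun k _ => by
        simpa only [glueAt_of_le (Nat.zero_le t), hg0, glueAt_of_ge (hσ k) ht, hgL]
          using hle (glueAt (g k) t (g (σ k)))
  have hσa : σ a = a := π.injective (congrArg (· a) (huniq _ hopt))
  exact hne (by simpa [σ] using hσa.symm)

theorem tPer_le_sum_tPer_of_nonsingular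
    (hle : ∀ g, segWeight M g 0 L ≤ W (g 0) (g L))
    (hex : ∀ i j, W i j ≠ ⊥ → ∃ g : ℕ → Fin n, g 0 = i ∧ g L = j ∧ segWeight M g 0 L = W i j)
    (hW : Nonsingular W) :
    tPer W ≤ ∑ t ∈ Finset.range L, tPer (M t) := by
  obtain ⟨π, hπ, huniq⟩ := hW
  by_cases hbot : tPer W = ⊥
  · exact hbot ▸ bot_le
  have hfin : ∀ v, W v (π v) ≠ ⊥ := by
    simpa [permWeight, WithBot.sum_eq_bot_iff] using (hπ ▸ hbot : permWeight W π ≠ ⊥)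
  choose g hg0 hgL hg using fun v => hex v (π v) (hfin v)
  have hsum : tPer W = ∑ v, segWeight M (g v) 0 L := by
    rw [← hπ]
    exact Finset.sum_congr rfl fun v _ => (hg v).symm
  have hbij : ∀ t ≤ L, Function.Bijective fun v => g v t := fun t ht =>
    (injective_slice_of_unique_optimal M L W hle huniq g hg0 hgL hsum.le ht).bijective_of_finite
  calc tPer W = ∑ v, segWeight M (g v) 0 L := hsum
    _ = ∑ t ∈ Finset.range L, ∑ v, M t (g v t) (g v (t + 1)) := by
      rw [Finset.range_eq_Ico]; exact Finset.sum_comm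
    _ ≤ ∑ t ∈ Finset.range L, tPer (M t) := Finset.sum_le_sum fun t ht => by
      have ht := Finset.mem_range.mp ht
      exact sum_apply_le_tPer (M t) (Equiv.ofBijective _ (hbij t ht.le))
        (Equiv.ofBijective _ (hbij (t + 1) ht))

lemma segWeight_const_eq_diag_ne_bot (hM : ∀ t < L, tPer (M t) = tTrace (M t))
    (hle : ∀ g, segWeight M g 0 L ≤ W (g 0) (g L))
    (hex : ∀ i j, W i j ≠ ⊥ → ∃ g : ℕ → Fin n, g 0 = i ∧ g L = j ∧ segWeight M g 0 L = W i j)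
    (hW : Nonsingular W) (hper : tPer W ≠ ⊥) (v : Fin n) :
    segWeight M (fun _ => v) 0 L = W v v ∧ W v v ≠ ⊥ := by
  have hsum : ∑ t ∈ Finset.range L, tPer (M t) = ∑ v, segWeight M (fun _ => v) 0 L := by
    rw [Finset.sum_congr rfl fun t ht => hM t (Finset.mem_range.mp ht), Finset.range_eq_Ico]
    exact Finset.sum_comm
  have hper_le : tPer W ≤ ∑ v, segWeight M (fun _ => v) 0 L :=
    (tPer_le_sum_tPer_of_nonsingular M L W hle hex hW).trans hsum.le
  have hne : ∑ v, segWeight M (fun _ => v) 0 L ≠ ⊥ := ne_bot_of_le_ne_bot hper hper_le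
  have heq := WithBot.eq_of_le_of_sum_le_sum (fun v => hle fun _ => v)
    ((tTrace_le_tPer W).trans hper_le) hne v
  exact ⟨heq, heq ▸ fun hv => hne (WithBot.sum_eq_bot_iff.mpr ⟨v, Finset.mem_univ v, hv⟩)⟩

end HeaviestWalks

section OneCyclic

def IsOneCyclic {α : Type*} (g : ℕ → α) (L : ℕ) : Prop :=
  ∀ t₁ m t₂, t₁ ≤ m → m ≤ t₂ → t₂ ≤ L → g t₁ = g t₂ → g m = g t₁

def loops {α : Type*} [DecidableEq α] (g : ℕ → α) (L : ℕ) : Finset ℕ :=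
  (Finset.range L).filter fun t => g t = g (t + 1)

lemma exists_ne_succ_of_ne {α : Type*} {g : ℕ → α} {a m : ℕ} (ham : a ≤ m) (h : g m ≠ g a) :
    ∃ s, a ≤ s ∧ s < m ∧ g s ≠ g (s + 1) := by
  induction m, ham using Nat.le_induction with
  | base => exact absurd rfl h
  | succ m ham ih =>
    by_cases hm : g m = g a
    · exact ⟨m, ham, m.lt_succ_self, hm ▸ h.symm⟩
    · obtain ⟨s, h₁, h₂, h₃⟩ := ih hm
      exact ⟨s, h₁, by omega, h₃⟩

variable {n : ℕ} (M : ℕ → Matrix (Fin n) (Fin n) Trop) (L : ℕ)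

lemma exists_loops_ssubset
    (hclosed : ∀ v h, h 0 = v → h L = v → segWeight M h 0 L ≤ segWeight M (fun _ => v) 0 L)
    (hfin : ∀ v, segWeight M (fun _ => v) 0 L ≠ ⊥) {g : ℕ → Fin n} (hg : ¬IsOneCyclic g L) :
    ∃ g', g' 0 = g 0 ∧ g' L = g L ∧ segWeight M g 0 L ≤ segWeight M g' 0 L ∧
      loops g L ⊂ loops g' L := by
  simp only [IsOneCyclic, not_forall] at hg
  obtain ⟨t₁, m, t₂, h₁, h₂, hL, heq, hm⟩ := hg
  have h₁₂ : t₁ ≤ t₂ := h₁.trans h₂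
  set v := g t₁
  set c : ℕ → Fin n := fun _ => v
  set X := glueAt g t₁ c
  set Y := glueAt c t₁ g
  have hX : ∀ s, t₁ ≤ s → X s = v := fun s => glueAt_of_ge (g := g) (g' := c) rfl
  have hY : ∀ s, t₁ ≤ s → Y s = g s := fun s => glueAt_of_ge (g := c) (g' := g) rfl
  have hXY : X t₂ = Y t₂ := (hX t₂ h₁₂).trans (heq.trans (hY t₂ h₁₂).symm)
  -- `g'` stays at `v` during `[t₁, t₂]`, and `h` is the closed walk at `v` formed by that detour
  set g' := glueAt X t₂ Y
  set h := glueAt Y t₂ X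
  have hexch : segWeight M g 0 L + segWeight M c 0 L = segWeight M g' 0 L + segWeight M h 0 L :=
    (segWeight_glueAt_add_glueAt M (g := g) (g' := c) rfl (h₁₂.trans hL)).symm.trans
      (segWeight_glueAt_add_glueAt M hXY hL).symm
  have hh : segWeight M h 0 L ≤ segWeight M c 0 L :=
    hclosed v h ((glueAt_of_le (Nat.zero_le _)).trans (glueAt_of_le (Nat.zero_le _)))
      ((glueAt_of_ge hXY.symm hL).trans (hX L (h₁₂.trans hL)))
  have hg'in : ∀ s, t₁ ≤ s → s ≤ t₂ → g' s = v := fun s hs₁ hs₂ =>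
    (glueAt_of_le hs₂).trans (hX s hs₁)
  have hg'out : ∀ s, s ≤ t₁ ∨ t₂ ≤ s → g' s = g s := by
    rintro s (hs | hs)
    · exact (glueAt_of_le (hs.trans h₁₂)).trans (glueAt_of_le hs)
    · exact (glueAt_of_ge hXY hs).trans (hY s (h₁₂.trans hs))
  refine ⟨g', hg'out 0 (Or.inl (Nat.zero_le _)), hg'out L (Or.inr hL), ?_, ?_⟩
  · exact (WithBot.add_le_add_iff_right (hfin v)).mp (hexch ▸ add_le_add le_rfl hh)
  have hsub : loops g L ⊆ loops g' L := fun t ht => by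
    simp only [loops, Finset.mem_filter] at ht ⊢
    refine ⟨ht.1, ?_⟩
    by_cases hin : t₁ ≤ t ∧ t + 1 ≤ t₂
    · rw [hg'in t hin.1 (by omega), hg'in (t + 1) (by omega) hin.2]
    · rw [hg'out t (by omega), hg'out (t + 1) (by omega), ht.2]
  obtain ⟨s, hs₁, hs₂, hs⟩ := exists_ne_succ_of_ne h₁ hm
  refine (Finset.ssubset_iff_of_subset hsub).mpr ⟨s, ?_, ?_⟩
  · simp only [loops, Finset.mem_filter, Finset.mem_range]
    exact ⟨by omega, by rw [hg'in s hs₁ (by omega), hg'in (s + 1) (by omega) (by omega)]⟩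
  · simp [loops, hs]

lemma exists_isOneCyclic_of_le
    (hclosed : ∀ v h, h 0 = v → h L = v → segWeight M h 0 L ≤ segWeight M (fun _ => v) 0 L)
    (hfin : ∀ v, segWeight M (fun _ => v) 0 L ≠ ⊥) (g : ℕ → Fin n) :
    ∃ g', g' 0 = g 0 ∧ g' L = g L ∧ segWeight M g 0 L ≤ segWeight M g' 0 L ∧
      IsOneCyclic g' L := by
  obtain ⟨g', ⟨h0, hL, hle⟩, hmin⟩ :=
    (measure fun g' : ℕ → Fin n => L - (loops g' L).card).wf.has_min
      {g' | g' 0 = g 0 ∧ g' L = g L ∧ segWeight M g 0 L ≤ segWeight M g' 0 L} ⟨g, rfl, rfl, le_rfl⟩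
  refine ⟨g', h0, hL, hle, by_contra fun hcyc => ?_⟩
  obtain ⟨g'', h0', hL', hle', hss⟩ := exists_loops_ssubset M L hclosed hfin hcyc
  have hlt := Finset.card_lt_card hss
  have hbound : (loops g'' L).card ≤ L :=
    (Finset.card_filter_le _ _).trans (Finset.card_range L).le
  exact hmin g'' ⟨h0'.trans h0, hL'.trans hL, hle.trans hle'⟩ (show L - _ < L - _ by omega)

end OneCyclic

/-- The walk is encoded by its node sequence `f : Fin (ℓ(w)+1) → Fin n`; 1-cyclic means that
between any two equal occurrences of a node all visited nodes coincide. -/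
theorem one_cyclic_walk_general {n : ℕ} (A B : Matrix (Fin n) (Fin n) Trop)
    (w : List Bool)
    (hA : tPer A = tTrace A) (hB : tPer B = tTrace B)
    (hrk : tropRank (mEval A B w) = n)
    (i j : Fin n) (hij : mEval A B w i j ≠ ⊥) :
    ∃ f : Fin (w.length + 1) → Fin n,
      f 0 = i ∧ f (Fin.last w.length) = j ∧
      (∀ k : Fin w.length, (if w.get k then A else B) (f k.castSucc) (f k.succ) ≠ ⊥) ∧
      (∑ k : Fin w.length, (if w.get k then A else B) (f k.castSucc) (f k.succ))
        = mEval A B w i j ∧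
      (∀ k₁ m k₂ : Fin (w.length + 1), k₁ ≤ m → m ≤ k₂ → f k₁ = f k₂ → f m = f k₁) := by
  have hle := segWeight_le_mEval A B w
  have hM : ∀ t < w.length, tPer (letterSeq A B w t) = tTrace (letterSeq A B w t) :=
    fun t _ => by unfold letterSeq; split_ifs; exacts [hA, hB]
  have hW := nonsingular_of_tropRank_eq hrk
  have hdiag := segWeight_const_eq_diag_ne_bot _ _ _ hM hle (exists_segWeight_eq_mEval A B w) hW
    (hW.tPer_ne_bot hij)
  obtain ⟨g₀, hg₀0, hg₀L, hg₀⟩ := exists_segWeight_eq_mEval A B w i j hij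
  obtain ⟨g, hg0, hgL, hg₀g, hcyc⟩ := exists_isOneCyclic_of_le _ _
    (fun v h h0 hL => (hle h).trans_eq (by rw [h0, hL, (hdiag v).1]))
    (fun v => (hdiag v).1 ▸ (hdiag v).2) g₀
  have hsum : ∑ k : Fin w.length, (if w.get k then A else B) (g k.castSucc) (g k.succ) =
      mEval A B w i j := by
    rw [sum_get_eq_segWeight]
    exact le_antisymm ((hle g).trans_eq (by rw [hg0, hgL, hg₀0, hg₀L])) (hg₀ ▸ hg₀g)
  refine ⟨fun k => g k, hg0.trans hg₀0, hgL.trans hg₀L, fun k hk => hij ?_, hsum,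
    fun k₁ m k₂ h₁ h₂ => hcyc k₁ m k₂ h₁ h₂ k₂.is_le⟩
  exact hsum ▸ WithBot.sum_eq_bot_iff.mpr ⟨k, Finset.mem_univ k, hk⟩

/-- 1-cyclic walk lemma.  Under condition (PR), every non-`−∞` entry
`W_{i,j}` of `W = w(A,B)` is the weight of a 1-cyclic walk from `i` to `j` labeled by `w`.
The walk is encoded by its node sequence `f : Fin (ℓ(w)+1) → Fin n`; 1-cyclic means that
between any two equal occurrences of a node all visited nodes coincide, i.e. the walk never
returns to a node after leaving it. -/
theorem one_cyclic_walk {n : ℕ} (A B : Matrix (Fin n) (Fin n) Trop)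
    (w : List Bool) (hw : w ≠ [])
    (hA : tPer A = tTrace A) (hB : tPer B = tTrace B)
    (hrk : tropRank (mEval A B w) = n)
    (i j : Fin n) (hij : mEval A B w i j ≠ ⊥) :
    ∃ f : Fin (w.length + 1) → Fin n,
      f 0 = i ∧ f (Fin.last w.length) = j ∧
      (∀ k : Fin w.length, (if w.get k then A else B) (f k.castSucc) (f k.succ) ≠ ⊥) ∧
      (∑ k : Fin w.length, (if w.get k then A else B) (f k.castSucc) (f k.succ))
        = mEval A B w i j ∧
      (∀ k₁ m k₂ : Fin (w.length + 1), k₁ ≤ m → m ≤ k₂ → f k₁ = f k₂ → f m = f k₁) :=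
  one_cyclic_walk_general A B w hA hB hrk i j hij
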